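/- (Weighted epsilon interpolation) Fix $\mu \ge 0$ and $n \ge 1$. For every $\epsilon > 0$ there exists $C(\epsilon) > 0$ such that for all $u \in C_c^\infty(\mathbb{R}^n)$, $\|\langle x \rangle^{-\mu} \partial_x u\|_{L^2(\mathbb{R}^n)} \le \epsilon \|\langle x \rangle^{-\mu} \partial_x^2 u\|_{L^2(\mathbb{R}^n)} + C(\epsilon) \|\langle x \rangle^{-\mu} u\|_{L^2(\mathbb{R}^n)}$. -/

import Mathlib

open MeasureTheory

/-! Auxiliary lemmas for the weighted interpolation inequality. -/

/-- The weight function `⟨x⟩^{-2μ} = (1+‖x‖²)^{-μ}`. -/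
noncomputable def wfun (μ : ℝ) {n : ℕ} (y : EuclideanSpace ℝ (Fin n)) : ℝ :=
  (1 + ‖y‖^2) ^ (-μ)

lemma one_add_normsq_pos {n : ℕ} (x : EuclideanSpace ℝ (Fin n)) : (0:ℝ) < 1 + ‖x‖^2 := by
  positivity

lemma wfun_pos (μ : ℝ) {n : ℕ} (x : EuclideanSpace ℝ (Fin n)) : 0 < wfun μ x :=
  Real.rpow_pos_of_pos (one_add_normsq_pos x) _

lemma wfun_sq (μ : ℝ) {n : ℕ} (x : EuclideanSpace ℝ (Fin n)) :
    ((1 + ‖x‖^2 : ℝ) ^ (-μ/2))^2 = wfun μ x := by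
  unfold wfun
  rw [← Real.rpow_natCast ((1 + ‖x‖^2 : ℝ) ^ (-μ/2)) 2,
    ← Real.rpow_mul (one_add_normsq_pos x).le]
  norm_num

lemma norm_clm_sq_eq_sum {n : ℕ} (f : EuclideanSpace ℝ (Fin n) →L[ℝ] ℝ) :
    ‖f‖^2 = ∑ i, (f (EuclideanSpace.single i 1))^2 := by
  set v : EuclideanSpace ℝ (Fin n) :=
    (WithLp.equiv 2 _).symm (fun i => f (EuclideanSpace.single i 1)) with hvdef
  have hv : f = innerSL ℝ v := by
    apply ContinuousLinearMap.coe_injective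
    apply Module.Basis.ext (EuclideanSpace.basisFun (Fin n) ℝ).toBasis
    intro i
    simp [EuclideanSpace.basisFun_apply, EuclideanSpace.inner_single_right, hvdef, v,
      real_inner_comm]
  have h1 : ‖f‖ = ‖v‖ := by rw [hv, innerSL_apply_norm]
  rw [h1, EuclideanSpace.norm_eq, Real.sq_sqrt (by positivity)]
  simp [hvdef, v]

lemma weight_hasFDerivAt {n : ℕ} (μ : ℝ) (x : EuclideanSpace ℝ (Fin n)) :
    HasFDerivAt (wfun μ) ((-μ * (1 + ‖x‖^2) ^ (-μ - 1)) • (2 • (innerSL ℝ x))) x := by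
  have hs : HasFDerivAt (fun y : EuclideanSpace ℝ (Fin n) => 1 + ‖y‖^2)
      (2 • (innerSL ℝ x)) x := by
    simpa using ((hasFDerivAt_id x).norm_sq).const_add 1
  have hg : HasDerivAt (fun t : ℝ => t ^ (-μ)) (-μ * (1 + ‖x‖^2) ^ (-μ - 1)) (1 + ‖x‖^2) := by
    simpa [mul_comm] using Real.hasDerivAt_rpow_const (p := -μ)
      (Or.inl (ne_of_gt (one_add_normsq_pos x)))
  exact hg.comp_hasFDerivAt x hs

lemma weight_contDiff {n : ℕ} (μ : ℝ) : ContDiff ℝ (⊤ : ℕ∞) (wfun μ (n := n)) := by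
  rw [contDiff_iff_contDiffAt]
  intro x
  have h1 : ContDiffAt ℝ (⊤ : ℕ∞) (fun t : ℝ => t ^ (-μ)) (1 + ‖x‖^2) :=
    Real.contDiffAt_rpow_const_of_ne (ne_of_gt (one_add_normsq_pos x))
  exact h1.comp x ((contDiff_const.add (contDiff_norm_sq ℝ)).contDiffAt)

lemma weight_fderiv_bound {n : ℕ} {μ : ℝ} (hμ : 0 ≤ μ) (x v : EuclideanSpace ℝ (Fin n)) :
    |fderiv ℝ (wfun μ) x v| ≤ μ * wfun μ x * ‖v‖ := by
  have hpos := one_add_normsq_pos x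
  rw [(weight_hasFDerivAt μ x).fderiv]
  have h1 : ((-μ * (1 + ‖x‖^2) ^ (-μ - 1)) • (2 • (innerSL ℝ x))) v
      = -μ * (1 + ‖x‖^2) ^ (-μ - 1) * (2 * (inner ℝ x v : ℝ)) := by
    simp [ContinuousLinearMap.smul_apply]
  rw [h1, abs_mul]
  have h2 : |2 * (inner ℝ x v : ℝ)| ≤ (1 + ‖x‖^2) * ‖v‖ := by
    rw [abs_mul]
    have := abs_real_inner_le_norm x v
    have h2x : 2 * ‖x‖ ≤ 1 + ‖x‖^2 := by nlinarith [sq_nonneg (‖x‖ - 1)]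
    calc |(2:ℝ)| * |(inner ℝ x v : ℝ)| ≤ 2 * (‖x‖ * ‖v‖) := by
          rw [abs_two]; exact mul_le_mul_of_nonneg_left this (by norm_num)
      _ = (2 * ‖x‖) * ‖v‖ := by ring
      _ ≤ (1 + ‖x‖^2) * ‖v‖ := mul_le_mul_of_nonneg_right h2x (norm_nonneg v)
  have h3 : |(-μ * (1 + ‖x‖^2) ^ (-μ - 1))| = μ * (1 + ‖x‖^2) ^ (-μ - 1) := by
    rw [abs_mul, abs_neg, abs_of_nonneg hμ, abs_of_nonneg (Real.rpow_nonneg hpos.le _)]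
  rw [h3]
  calc μ * (1 + ‖x‖^2) ^ (-μ - 1) * |2 * (inner ℝ x v : ℝ)|
      ≤ μ * (1 + ‖x‖^2) ^ (-μ - 1) * ((1 + ‖x‖^2) * ‖v‖) := by
        apply mul_le_mul_of_nonneg_left h2 (by positivity)
    _ = μ * ((1 + ‖x‖^2) ^ (-μ - 1) * (1 + ‖x‖^2)) * ‖v‖ := by ring
    _ = μ * wfun μ x * ‖v‖ := by
        unfold wfun
        rw [← Real.rpow_add_one (ne_of_gt hpos)]
        norm_num

lemma du_contDiff {n : ℕ} {u : EuclideanSpace ℝ (Fin n) → ℝ} (hu : ContDiff ℝ (⊤ : ℕ∞) u)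
    (v : EuclideanSpace ℝ (Fin n)) :
    ContDiff ℝ (⊤ : ℕ∞) (fun y => fderiv ℝ u y v) :=
  (ContinuousLinearMap.apply ℝ ℝ v).contDiff.comp (hu.fderiv_right (by simp))

lemma du_compactSupport {n : ℕ} {u : EuclideanSpace ℝ (Fin n) → ℝ} (hs : HasCompactSupport u)
    (v : EuclideanSpace ℝ (Fin n)) :
    HasCompactSupport (fun y => fderiv ℝ u y v) :=
  (hs.fderiv ℝ).comp_left (g := fun L : EuclideanSpace ℝ (Fin n) →L[ℝ] ℝ => L v) rfl

lemma second_deriv_bound {n : ℕ} {u : EuclideanSpace ℝ (Fin n) → ℝ} (hu : ContDiff ℝ (⊤ : ℕ∞) u)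
    (x : EuclideanSpace ℝ (Fin n)) (i : Fin n) :
    |fderiv ℝ (fun y => fderiv ℝ u y (EuclideanSpace.single i 1)) x (EuclideanSpace.single i 1)|
      ≤ ‖iteratedFDeriv ℝ 2 u x‖ := by
  set e : EuclideanSpace ℝ (Fin n) := EuclideanSpace.single i 1 with he
  have hc : DifferentiableAt ℝ (fderiv ℝ u) x :=
    (hu.fderiv_right (m := (⊤ : ℕ∞)) (by simp)).differentiable (by simp) x
  have h1 : fderiv ℝ (fun y => fderiv ℝ u y e) x
      = ((fderiv ℝ u x).comp (fderiv ℝ (fun _ : EuclideanSpace ℝ (Fin n) => e) x))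
        + (fderiv ℝ (fderiv ℝ u) x).flip e :=
    fderiv_clm_apply hc (differentiableAt_const e)
  have h2 : fderiv ℝ (fun y => fderiv ℝ u y e) x e = fderiv ℝ (fderiv ℝ u) x e e := by
    rw [h1]; simp
  rw [h2]
  have h3 : iteratedFDeriv ℝ 2 u x ![e, e] = fderiv ℝ (fderiv ℝ u) x e e := by
    rw [iteratedFDeriv_two_apply]; simp
  rw [← h3]
  have h4 := (iteratedFDeriv ℝ 2 u x).le_opNorm ![e, e]
  have h5 : ∀ j : Fin 2, ‖(![e, e] : Fin 2 → EuclideanSpace ℝ (Fin n)) j‖ = 1 := by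
    intro j; fin_cases j <;> simp [he, EuclideanSpace.norm_single]
  rw [Real.norm_eq_abs] at h4
  calc |iteratedFDeriv ℝ 2 u x ![e, e]|
      ≤ ‖iteratedFDeriv ℝ 2 u x‖ * ∏ j : Fin 2, ‖(![e, e] : Fin 2 → _) j‖ := by
        simpa using h4
    _ = ‖iteratedFDeriv ℝ 2 u x‖ := by simp [h5]

lemma ibp {n : ℕ} (μ : ℝ) {u : EuclideanSpace ℝ (Fin n) → ℝ} (hu : ContDiff ℝ (⊤ : ℕ∞) u)
    (hs : HasCompactSupport u) (v : EuclideanSpace ℝ (Fin n)) :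
    ∫ x : EuclideanSpace ℝ (Fin n), wfun μ x * (fderiv ℝ u x v)^2
      = -∫ x : EuclideanSpace ℝ (Fin n),
          (fderiv ℝ (wfun μ) x v * fderiv ℝ u x v
            + wfun μ x * fderiv ℝ (fun y => fderiv ℝ u y v) x v) * u x := by
  have hw_cd : ContDiff ℝ (⊤ : ℕ∞) (wfun μ (n := n)) := weight_contDiff μ
  have hdu_cd : ContDiff ℝ (⊤ : ℕ∞) (fun y => fderiv ℝ u y v) := du_contDiff hu v
  have hdu_cs : HasCompactSupport (fun y => fderiv ℝ u y v) := du_compactSupport hs v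
  set du : EuclideanSpace ℝ (Fin n) → ℝ := fun y => fderiv ℝ u y v with hdu
  set f : EuclideanSpace ℝ (Fin n) → ℝ := fun y => wfun μ y * du y with hf
  have hf_cd : ContDiff ℝ (⊤ : ℕ∞) f := hw_cd.mul hdu_cd
  have hf_cs : HasCompactSupport f := hdu_cs.mul_left
  obtain ⟨C, hClip⟩ := hf_cd.lipschitzWith_of_hasCompactSupport hf_cs (by simp)
  obtain ⟨D, hDlip⟩ := hu.lipschitzWith_of_hasCompactSupport hs (by simp)
  have key := hClip.integral_lineDeriv_mul_eq hDlip hs v (μ := volume)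
  have hL : (∫ x, lineDeriv ℝ f x v * u x)
      = ∫ x, (fderiv ℝ (wfun μ) x v * du x + wfun μ x * fderiv ℝ du x v) * u x := by
    apply integral_congr_ae; apply ae_of_all; intro x
    have h1 : lineDeriv ℝ f x v = fderiv ℝ f x v :=
      ((hf_cd.differentiable (by simp)) x).lineDeriv_eq_fderiv
    have h2 : fderiv ℝ f x = wfun μ x • fderiv ℝ du x + du x • fderiv ℝ (wfun μ) x :=
      fderiv_mul ((hw_cd.differentiable (by simp)) x) ((hdu_cd.differentiable (by simp)) x)
    show lineDeriv ℝ f x v * u x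
      = (fderiv ℝ (wfun μ) x v * du x + wfun μ x * fderiv ℝ du x v) * u x
    rw [h1, h2]
    simp only [ContinuousLinearMap.add_apply, ContinuousLinearMap.coe_smul', Pi.smul_apply,
      smul_eq_mul]
    ring
  have hR : (∫ x, lineDeriv ℝ u x (-v) * f x) = -∫ x, wfun μ x * (du x)^2 := by
    rw [← integral_neg]
    apply integral_congr_ae; apply ae_of_all; intro x
    have h1 : lineDeriv ℝ u x (-v) = fderiv ℝ u x (-v) :=
      ((hu.differentiable (by simp)) x).lineDeriv_eq_fderiv
    show lineDeriv ℝ u x (-v) * f x = -(wfun μ x * (du x)^2)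
    rw [h1]
    simp [hf, hdu, sq]
    ring
  rw [hL, hR] at key
  linarith

lemma int_cs {α : Type*} [MeasurableSpace α] {m : Measure α} {f g : α → ℝ}
    (hf : MemLp f 2 m) (hg : MemLp g 2 m) :
    ∫ x, |f x * g x| ∂m ≤ Real.sqrt (∫ x, (f x)^2 ∂m) * Real.sqrt (∫ x, (g x)^2 ∂m) := by
  have hpq : Real.HolderConjugate 2 2 := Real.HolderConjugate.two_two
  have h2 : (ENNReal.ofReal 2) = 2 := by
    rw [show (2:ℝ) = ((2:ℕ):ℝ) by norm_num, ENNReal.ofReal_natCast]; norm_num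
  have key := integral_mul_le_Lp_mul_Lq_of_nonneg hpq (f := fun x => |f x|) (g := fun x => |g x|)
    (Filter.Eventually.of_forall fun x => abs_nonneg _)
    (Filter.Eventually.of_forall fun x => abs_nonneg _)
    (h2 ▸ hf.abs) (h2 ▸ hg.abs)
  have habs : ∀ y : ℝ, |y| ^ (2:ℝ) = y^2 := fun y => by
    rw [show (2:ℝ) = ((2:ℕ):ℝ) by norm_num, Real.rpow_natCast, sq_abs]
  simp only [habs] at key
  calc ∫ x, |f x * g x| ∂m = ∫ x, |f x| * |g x| ∂m := by
        apply integral_congr_ae; apply ae_of_all; intro x; exact abs_mul _ _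
    _ ≤ (∫ x, (f x)^2 ∂m) ^ ((1:ℝ)/2) * (∫ x, (g x)^2 ∂m) ^ ((1:ℝ)/2) := key
    _ = Real.sqrt (∫ x, (f x)^2 ∂m) * Real.sqrt (∫ x, (g x)^2 ∂m) := by
        rw [Real.sqrt_eq_rpow, Real.sqrt_eq_rpow]
lemma final_algebra {nR μ ε C₀ sI sJ sK : ℝ} (hn : 0 < nR) (hμ : 0 ≤ μ) (hε : 0 < ε)
    (hC₀ : C₀ = 2*nR^2/ε^2 + nR^2*μ^2 + 1)
    (hsI : 0 ≤ sI) (hsJ : 0 ≤ sJ) (hsK : 0 ≤ sK)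
    (hmain : sI^2 ≤ nR*μ*(sI*sK) + nR*(sJ*sK)) :
    sI ≤ ε*sJ + Real.sqrt C₀*sK := by
  have hC₀pos : 0 < C₀ := by rw [hC₀]; positivity
  set a : ℝ := nR/ε with hadef
  have han : nR = a * ε := by rw [hadef]; field_simp
  have h1 : nR*(sJ*sK) ≤ ε^2/4*sJ^2 + a^2*sK^2 := by
    rw [han]; nlinarith [sq_nonneg (ε/2*sJ - a*sK)]
  have h2 : nR*μ*(sI*sK) ≤ 1/2*sI^2 + nR^2*μ^2/2*sK^2 := by
    nlinarith [sq_nonneg (sI - nR*μ*sK)]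
  have hfin : sI^2 ≤ ε^2/2*sJ^2 + (2*a^2 + nR^2*μ^2)*sK^2 := by linarith
  have hC₀ge : 2*a^2 + nR^2*μ^2 ≤ C₀ := by
    rw [hC₀, hadef]
    have hdp : (nR/ε)^2 = nR^2/ε^2 := div_pow _ _ _
    have h2e : 2 * nR^2/ε^2 = 2*(nR^2/ε^2) := by ring
    linarith
  have hCsq : (Real.sqrt C₀)^2 = C₀ := Real.sq_sqrt hC₀pos.le
  have hsq : sI^2 ≤ (ε*sJ + Real.sqrt C₀*sK)^2 := by
    nlinarith [hfin, hCsq, sq_nonneg sJ, sq_nonneg sK, hC₀ge,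
      mul_nonneg (mul_nonneg hε.le hsJ) (mul_nonneg (Real.sqrt_nonneg C₀) hsK)]
  have hrhs : 0 ≤ ε*sJ + Real.sqrt C₀*sK :=
    add_nonneg (mul_nonneg hε.le hsJ) (mul_nonneg (Real.sqrt_nonneg C₀) hsK)
  calc sI = Real.sqrt (sI^2) := (Real.sqrt_sq hsI).symm
    _ ≤ Real.sqrt ((ε*sJ + Real.sqrt C₀*sK)^2) := Real.sqrt_le_sqrt hsq
    _ = ε*sJ + Real.sqrt C₀*sK := Real.sqrt_sq hrhs
/-- Weighted epsilon interpolation: for `μ ≥ 0` and every `ε > 0` there is `C(ε) > 0`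
such that `‖⟨x⟩^{-μ} ∂ₓu‖_{L²} ≤ ε ‖⟨x⟩^{-μ} ∂ₓ²u‖_{L²} + C(ε) ‖⟨x⟩^{-μ} u‖_{L²}`
for all `u ∈ C_c^∞(ℝⁿ)`, where `⟨x⟩ = (1+|x|²)^{1/2}`. -/
theorem weighted_eps_interpolation (n : ℕ) (hn : 1 ≤ n) (μ : ℝ) (hμ : 0 ≤ μ)
    (ε : ℝ) (hε : 0 < ε) :
    ∃ C : ℝ, 0 < C ∧ ∀ u : EuclideanSpace ℝ (Fin n) → ℝ,
      ContDiff ℝ (⊤ : ℕ∞) u → HasCompactSupport u →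
      Real.sqrt (∫ x : EuclideanSpace ℝ (Fin n),
          ((1 + ‖x‖ ^ 2) ^ (-μ / 2) : ℝ) ^ 2 * ‖fderiv ℝ u x‖ ^ 2)
        ≤ ε * Real.sqrt (∫ x : EuclideanSpace ℝ (Fin n),
              ((1 + ‖x‖ ^ 2) ^ (-μ / 2) : ℝ) ^ 2 * ‖iteratedFDeriv ℝ 2 u x‖ ^ 2)
          + C * Real.sqrt (∫ x : EuclideanSpace ℝ (Fin n),
              ((1 + ‖x‖ ^ 2) ^ (-μ / 2) : ℝ) ^ 2 * (u x) ^ 2) := by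
  set C₀ : ℝ := 2*(n:ℝ)^2/ε^2 + (n:ℝ)^2*μ^2 + 1 with hC₀def
  have hnpos : (0:ℝ) < n := by exact_mod_cast hn
  have hC₀pos : 0 < C₀ := by positivity
  refine ⟨Real.sqrt C₀, Real.sqrt_pos.mpr hC₀pos, ?_⟩
  intro u hu hs
  have hwsq : ∀ x : EuclideanSpace ℝ (Fin n), ((1 + ‖x‖^2 : ℝ) ^ (-μ/2))^2 = wfun μ x :=
    wfun_sq μ
  simp only [hwsq]
  -- continuity / support inventory
  have hw_cont : Continuous (wfun μ (n := n)) := (weight_contDiff μ).continuous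
  have hwpos : ∀ x : EuclideanSpace ℝ (Fin n), 0 < wfun μ x := wfun_pos μ
  have hu_cont : Continuous u := hu.continuous
  have hgradn_cont : Continuous (fun x => ‖fderiv ℝ u x‖) := (hu.continuous_fderiv (by simp)).norm
  have hD2_cont : Continuous (fun x => ‖iteratedFDeriv ℝ 2 u x‖) :=
    (hu.continuous_iteratedFDeriv (by exact WithTop.coe_le_coe.mpr le_top)).norm
  have hgradn_cs : HasCompactSupport (fun x => ‖fderiv ℝ u x‖) :=
    (hs.fderiv ℝ).comp_left (g := fun L : EuclideanSpace ℝ (Fin n) →L[ℝ] ℝ => ‖L‖) norm_zero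
  have hD2_cs : HasCompactSupport (fun x => ‖iteratedFDeriv ℝ 2 u x‖) :=
    (hs.iteratedFDeriv 2).comp_left norm_zero
  have hint : ∀ (F : EuclideanSpace ℝ (Fin n) → ℝ), Continuous F → HasCompactSupport F →
      Integrable (fun x => wfun μ x * F x) := fun F hF hFs =>
    (hw_cont.mul hF).integrable_of_hasCompactSupport hFs.mul_left
  have hmem : ∀ (F : EuclideanSpace ℝ (Fin n) → ℝ), Continuous F → HasCompactSupport F →
      MemLp (fun x => Real.sqrt (wfun μ x) * F x) 2 volume := fun F hF hFs =>
    ((Real.continuous_sqrt.comp hw_cont).mul hF).memLp_of_hasCompactSupport hFs.mul_left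
  -- the three squared quantities
  set I := ∫ x : EuclideanSpace ℝ (Fin n), wfun μ x * ‖fderiv ℝ u x‖^2 with hIdef
  set J := ∫ x : EuclideanSpace ℝ (Fin n), wfun μ x * ‖iteratedFDeriv ℝ 2 u x‖^2 with hJdef
  set K := ∫ x : EuclideanSpace ℝ (Fin n), wfun μ x * (u x)^2 with hKdef
  have hInn : 0 ≤ I := integral_nonneg fun x => mul_nonneg (hwpos x).le (sq_nonneg _)
  have hJnn : 0 ≤ J := integral_nonneg fun x => mul_nonneg (hwpos x).le (sq_nonneg _)
  have hKnn : 0 ≤ K := integral_nonneg fun x => mul_nonneg (hwpos x).le (sq_nonneg _)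
  -- Cauchy-Schwarz bounds
  have sq_split : ∀ (F : EuclideanSpace ℝ (Fin n) → ℝ),
      (∫ x : EuclideanSpace ℝ (Fin n), (Real.sqrt (wfun μ x) * F x)^2)
        = ∫ x : EuclideanSpace ℝ (Fin n), wfun μ x * (F x)^2 := by
    intro F
    apply integral_congr_ae; apply ae_of_all; intro x
    show (Real.sqrt (wfun μ x) * F x)^2 = wfun μ x * (F x)^2
    rw [mul_pow, Real.sq_sqrt (hwpos x).le]
  have hP : (∫ x : EuclideanSpace ℝ (Fin n), wfun μ x * (‖fderiv ℝ u x‖ * |u x|))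
      ≤ Real.sqrt I * Real.sqrt K := by
    have h := int_cs (hmem _ hgradn_cont hgradn_cs) (hmem _ hu_cont hs)
    rw [sq_split, sq_split] at h
    refine le_trans (le_of_eq ?_) h
    apply integral_congr_ae; apply ae_of_all; intro x
    show wfun μ x * (‖fderiv ℝ u x‖ * |u x|)
      = |(Real.sqrt (wfun μ x) * ‖fderiv ℝ u x‖) * (Real.sqrt (wfun μ x) * u x)|
    rw [abs_mul, abs_mul, abs_mul, abs_of_nonneg (Real.sqrt_nonneg _),
      abs_of_nonneg (norm_nonneg _)]
    linear_combination (-(‖fderiv ℝ u x‖ * |u x|)) * Real.mul_self_sqrt (hwpos x).le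
  have hQ : (∫ x : EuclideanSpace ℝ (Fin n), wfun μ x * (‖iteratedFDeriv ℝ 2 u x‖ * |u x|))
      ≤ Real.sqrt J * Real.sqrt K := by
    have h := int_cs (hmem _ hD2_cont hD2_cs) (hmem _ hu_cont hs)
    rw [sq_split, sq_split] at h
    refine le_trans (le_of_eq ?_) h
    apply integral_congr_ae; apply ae_of_all; intro x
    show wfun μ x * (‖iteratedFDeriv ℝ 2 u x‖ * |u x|)
      = |(Real.sqrt (wfun μ x) * ‖iteratedFDeriv ℝ 2 u x‖) * (Real.sqrt (wfun μ x) * u x)|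
    rw [abs_mul, abs_mul, abs_mul, abs_of_nonneg (Real.sqrt_nonneg _),
      abs_of_nonneg (norm_nonneg _)]
    linear_combination (-(‖iteratedFDeriv ℝ 2 u x‖ * |u x|)) * Real.mul_self_sqrt (hwpos x).le
  -- per-coordinate pieces
  have hd_cont : ∀ i : Fin n, Continuous (fun x => fderiv ℝ u x (EuclideanSpace.single i 1)) :=
    fun i => (du_contDiff hu _).continuous
  have hd_cs : ∀ i : Fin n,
      HasCompactSupport (fun x => fderiv ℝ u x (EuclideanSpace.single i 1)) :=
    fun i => du_compactSupport hs _
  have hIsum : I = ∑ i : Fin n, ∫ x : EuclideanSpace ℝ (Fin n),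
      wfun μ x * (fderiv ℝ u x (EuclideanSpace.single i 1))^2 := by
    rw [hIdef]
    rw [show (fun x : EuclideanSpace ℝ (Fin n) => wfun μ x * ‖fderiv ℝ u x‖^2)
        = fun x => ∑ i : Fin n, wfun μ x * (fderiv ℝ u x (EuclideanSpace.single i 1))^2 from
      funext fun x => by rw [norm_clm_sq_eq_sum, Finset.mul_sum]]
    exact integral_finset_sum _ fun i _ =>
      hint _ ((hd_cont i).pow 2) ((hd_cs i).comp_left (g := fun t : ℝ => t^2) (by norm_num))
  -- integrability of the right-hand side pieces
  have habsu_cs : HasCompactSupport (fun x => |u x|) :=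
    hs.comp_left (g := fun t : ℝ => |t|) abs_zero
  have hg1 : Integrable (fun x : EuclideanSpace ℝ (Fin n) =>
      wfun μ x * (‖fderiv ℝ u x‖ * |u x|)) :=
    hint _ (hgradn_cont.mul hu_cont.abs) habsu_cs.mul_left
  have hg2 : Integrable (fun x : EuclideanSpace ℝ (Fin n) =>
      wfun μ x * (‖iteratedFDeriv ℝ 2 u x‖ * |u x|)) :=
    hint _ (hD2_cont.mul hu_cont.abs) habsu_cs.mul_left
  -- the integration-by-parts estimate, coordinate by coordinate
  have hstep : ∀ i : Fin n, (∫ x : EuclideanSpace ℝ (Fin n),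
        wfun μ x * (fderiv ℝ u x (EuclideanSpace.single i 1))^2)
      ≤ μ * (∫ x : EuclideanSpace ℝ (Fin n), wfun μ x * (‖fderiv ℝ u x‖ * |u x|))
        + ∫ x : EuclideanSpace ℝ (Fin n), wfun μ x * (‖iteratedFDeriv ℝ 2 u x‖ * |u x|) := by
    intro i
    rw [ibp μ hu hs (EuclideanSpace.single i 1), ← integral_neg]
    have hA_cont : Continuous (fun x => fderiv ℝ (wfun μ) x (EuclideanSpace.single i 1)
          * fderiv ℝ u x (EuclideanSpace.single i 1)
        + wfun μ x * fderiv ℝ (fun y => fderiv ℝ u y (EuclideanSpace.single i 1)) x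
            (EuclideanSpace.single i 1)) := by
      exact ((du_contDiff (weight_contDiff μ) _).continuous.mul (hd_cont i)).add
        (hw_cont.mul (du_contDiff (du_contDiff hu _) _).continuous)
    have hlhs_int : Integrable (fun x : EuclideanSpace ℝ (Fin n) =>
        -((fderiv ℝ (wfun μ) x (EuclideanSpace.single i 1)
            * fderiv ℝ u x (EuclideanSpace.single i 1)
          + wfun μ x * fderiv ℝ (fun y => fderiv ℝ u y (EuclideanSpace.single i 1)) x
              (EuclideanSpace.single i 1)) * u x)) := by
      exact ((hA_cont.mul hu_cont).integrable_of_hasCompactSupport hs.mul_left).neg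
    calc (∫ x : EuclideanSpace ℝ (Fin n),
          -((fderiv ℝ (wfun μ) x (EuclideanSpace.single i 1)
              * fderiv ℝ u x (EuclideanSpace.single i 1)
            + wfun μ x * fderiv ℝ (fun y => fderiv ℝ u y (EuclideanSpace.single i 1)) x
                (EuclideanSpace.single i 1)) * u x))
        ≤ ∫ x : EuclideanSpace ℝ (Fin n),
            (μ * (wfun μ x * (‖fderiv ℝ u x‖ * |u x|))
              + wfun μ x * (‖iteratedFDeriv ℝ 2 u x‖ * |u x|)) := by
          apply integral_mono hlhs_int ((hg1.const_mul μ).add hg2)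
          intro x
          have b1 : |fderiv ℝ (wfun μ) x (EuclideanSpace.single i 1)| ≤ μ * wfun μ x := by
            simpa [EuclideanSpace.norm_single] using
              weight_fderiv_bound hμ x (EuclideanSpace.single i 1)
          have b2 : |fderiv ℝ u x (EuclideanSpace.single i 1)| ≤ ‖fderiv ℝ u x‖ := by
            simpa [EuclideanSpace.norm_single] using
              (fderiv ℝ u x).le_opNorm (EuclideanSpace.single i 1)
          have b3 : |fderiv ℝ (fun y => fderiv ℝ u y (EuclideanSpace.single i 1)) x
              (EuclideanSpace.single i 1)| ≤ ‖iteratedFDeriv ℝ 2 u x‖ :=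
            second_deriv_bound hu x i
          show -((fderiv ℝ (wfun μ) x (EuclideanSpace.single i 1)
              * fderiv ℝ u x (EuclideanSpace.single i 1)
            + wfun μ x * fderiv ℝ (fun y => fderiv ℝ u y (EuclideanSpace.single i 1)) x
                (EuclideanSpace.single i 1)) * u x)
            ≤ μ * (wfun μ x * (‖fderiv ℝ u x‖ * |u x|))
              + wfun μ x * (‖iteratedFDeriv ℝ 2 u x‖ * |u x|)
          set a := fderiv ℝ (wfun μ) x (EuclideanSpace.single i 1)
          set b := fderiv ℝ u x (EuclideanSpace.single i 1)
          set c := fderiv ℝ (fun y => fderiv ℝ u y (EuclideanSpace.single i 1)) x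
            (EuclideanSpace.single i 1)
          calc -((a * b + wfun μ x * c) * u x)
              ≤ |(a * b + wfun μ x * c) * u x| := neg_le_abs _
            _ = |a * b + wfun μ x * c| * |u x| := abs_mul _ _
            _ ≤ (|a| * |b| + wfun μ x * |c|) * |u x| := by
                apply mul_le_mul_of_nonneg_right _ (abs_nonneg _)
                calc |a * b + wfun μ x * c| ≤ |a * b| + |wfun μ x * c| := abs_add_le _ _
                  _ = |a| * |b| + |wfun μ x| * |c| := by rw [abs_mul, abs_mul]
                  _ = |a| * |b| + wfun μ x * |c| := by rw [abs_of_nonneg (hwpos x).le]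
            _ ≤ (μ * wfun μ x * ‖fderiv ℝ u x‖
                  + wfun μ x * ‖iteratedFDeriv ℝ 2 u x‖) * |u x| := by
                apply mul_le_mul_of_nonneg_right _ (abs_nonneg _)
                have hb1 := mul_le_mul b1 b2 (abs_nonneg _)
                  (mul_nonneg hμ (hwpos x).le)
                have hb3 := mul_le_mul_of_nonneg_left b3 (hwpos x).le
                linarith
            _ = μ * (wfun μ x * (‖fderiv ℝ u x‖ * |u x|))
                + wfun μ x * (‖iteratedFDeriv ℝ 2 u x‖ * |u x|) := by ring
      _ = μ * (∫ x : EuclideanSpace ℝ (Fin n), wfun μ x * (‖fderiv ℝ u x‖ * |u x|))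
          + ∫ x : EuclideanSpace ℝ (Fin n), wfun μ x * (‖iteratedFDeriv ℝ 2 u x‖ * |u x|) := by
          rw [integral_add (hg1.const_mul μ) hg2, integral_const_mul]
  -- summing up
  have hmain : I ≤ (n:ℝ) * μ * (Real.sqrt I * Real.sqrt K)
      + (n:ℝ) * (Real.sqrt J * Real.sqrt K) := by
    have h1 : I ≤ ∑ _i : Fin n,
        (μ * (∫ x : EuclideanSpace ℝ (Fin n), wfun μ x * (‖fderiv ℝ u x‖ * |u x|))
          + ∫ x : EuclideanSpace ℝ (Fin n), wfun μ x * (‖iteratedFDeriv ℝ 2 u x‖ * |u x|)) := by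
      rw [hIsum]; exact Finset.sum_le_sum fun i _ => hstep i
    rw [Finset.sum_const, Finset.card_univ, Fintype.card_fin, nsmul_eq_mul] at h1
    have h2 := mul_le_mul_of_nonneg_left hP (mul_nonneg hnpos.le hμ)
    have h3 := mul_le_mul_of_nonneg_left hQ hnpos.le
    have h4 : (n:ℝ) * (μ * (∫ x : EuclideanSpace ℝ (Fin n),
          wfun μ x * (‖fderiv ℝ u x‖ * |u x|))
        + ∫ x : EuclideanSpace ℝ (Fin n), wfun μ x * (‖iteratedFDeriv ℝ 2 u x‖ * |u x|))
      = (n:ℝ) * μ * (∫ x : EuclideanSpace ℝ (Fin n), wfun μ x * (‖fderiv ℝ u x‖ * |u x|))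
        + (n:ℝ) * ∫ x : EuclideanSpace ℝ (Fin n),
            wfun μ x * (‖iteratedFDeriv ℝ 2 u x‖ * |u x|) := by ring
    linarith [h1, h2, h3]
  exact final_algebra hnpos hμ hε hC₀def (Real.sqrt_nonneg I) (Real.sqrt_nonneg J)
    (Real.sqrt_nonneg K) (by rw [Real.sq_sqrt hInn]; exact hmain)
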